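/- arXiv:1709.01200 — 6 statements merged into one kernel-verified Lean document; each statement's English description precedes it below -/
import Mathlib

section
/- For every integer N ≥ 0, the formal power series identity Z_N = Σ_{k=0}^{N} binom(N,k)·(N!/k!)·λ^k·D^k(Z_0) holds in ℚ[[λ]], where D^k denotes the k-fold formal derivative. -/
open PowerSeries Finset

/-- Double factorial with `dfact 0 = 1`; by natural subtraction, `dfact (2*k - 1)`
is `(2k-1)!!` with the convention `(-1)!! = 1` at `k = 0`. -/
def dfact : ℕ → ℕ
  | 0 => 1
  | 1 => 1
  | n + 2 => (n + 2) * dfact n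

/-- `Zser j ∈ ℚ[[λ]]` has coefficient of `λ^(2k)` equal to `(2k+j)!·(2k-1)!!/(2k)!`
and vanishing odd-degree coefficients. -/
noncomputable def Zser (j : ℕ) : PowerSeries ℚ :=
  PowerSeries.mk fun n => if n % 2 = 0 then
    (Nat.factorial (n + j) : ℚ) * (dfact (n - 1) : ℚ) / (Nat.factorial n : ℚ) else 0

lemma coeff_iter_deriv (k : ℕ) : ∀ (f : ℚ⟦X⟧) (n : ℕ),
    PowerSeries.coeff n (PowerSeries.derivativeFun^[k] f) =
      ((n + 1).ascFactorial k : ℚ) * PowerSeries.coeff (n + k) f := by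
  induction k with
  | zero => intro f n; simp
  | succ k ih =>
    intro f n
    rw [Function.iterate_succ_apply, ih]
    erw [coeff_derivative]
    rw [Nat.ascFactorial_succ]
    push_cast
    ring

lemma coeff_term (f : ℚ⟦X⟧) (k n : ℕ) :
    PowerSeries.coeff n (X ^ k * PowerSeries.derivativeFun^[k] f) =
      ((n.choose k * k.factorial : ℕ) : ℚ) * PowerSeries.coeff n f := by
  rcases le_or_gt k n with h | h
  · obtain ⟨d, rfl⟩ : ∃ d, n = d + k := ⟨n - k, (Nat.sub_add_cancel h).symm⟩
    rw [PowerSeries.coeff_X_pow_mul, coeff_iter_deriv,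
      Nat.ascFactorial_eq_factorial_mul_choose]
    push_cast
    ring
  · rw [Nat.choose_eq_zero_of_lt h, PowerSeries.coeff_mul,
      Finset.sum_eq_zero]
    · simp
    · rintro ⟨i, j⟩ hij
      rw [PowerSeries.coeff_X_pow, if_neg, zero_mul]
      rintro rfl
      rw [Finset.HasAntidiagonal.mem_antidiagonal] at hij
      omega

lemma vandermonde' (N n : ℕ) :
    ∑ k ∈ Finset.range (N + 1), N.choose k * n.choose k = (n + N).choose N := by
  rw [Nat.add_choose_eq, Finset.Nat.sum_antidiagonal_eq_sum_range_succ_mk]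
  refine Finset.sum_congr rfl fun k hk => ?_
  rw [Finset.mem_range] at hk
  rw [Nat.choose_symm (by omega : k ≤ N), mul_comm]

/-- For every `N ≥ 0`,
`Z_N = Σ_{k=0}^{N} binom(N,k)·(N!/k!)·λ^k·D^k(Z_0)` in `ℚ[[λ]]`. -/
theorem Zser_eq_sum_deriv (N : ℕ) :
    Zser N = ∑ k ∈ Finset.range (N + 1),
      ((N.choose k : ℚ) * ((N.factorial : ℚ) / (k.factorial : ℚ))) •
        (X ^ k * (PowerSeries.derivativeFun^[k] (Zser 0))) := by
  ext n
  rw [map_sum]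
  simp only [map_smul, smul_eq_mul, coeff_term]
  have hsum : ∑ k ∈ Finset.range (N + 1),
      (N.choose k : ℚ) * ((N.factorial : ℚ) / (k.factorial : ℚ)) *
        (((n.choose k * k.factorial : ℕ) : ℚ) * PowerSeries.coeff n (Zser 0)) =
      (((n + N).choose N * N.factorial : ℕ) : ℚ) * PowerSeries.coeff n (Zser 0) := by
    simp only [← mul_assoc]
    rw [← Finset.sum_mul]
    congr 1
    have hterm : ∀ k ∈ Finset.range (N + 1),
        ((N.choose k : ℚ) * ((N.factorial : ℚ) / (k.factorial : ℚ)) *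
          ((n.choose k * k.factorial : ℕ) : ℚ)) =
        ((N.choose k * n.choose k * N.factorial : ℕ) : ℚ) := by
      intro k _
      have hk' : (k.factorial : ℚ) ≠ 0 := Nat.cast_ne_zero.2 k.factorial_ne_zero
      push_cast
      field_simp
    rw [Finset.sum_congr rfl hterm, ← Nat.cast_sum, ← Finset.sum_mul, vandermonde']
  rw [hsum]
  simp only [Zser, coeff_mk]
  by_cases hn : n % 2 = 0
  · rw [if_pos hn, if_pos hn]
    have hfac : ((n + N).factorial : ℚ) =
        (((n + N).choose N * N.factorial * n.factorial : ℕ) : ℚ) := by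
      rw [show (n + N).choose N * N.factorial * n.factorial =
        (n + N).choose N * n.factorial * N.factorial by ring,
        Nat.add_choose_mul_factorial_mul_factorial]
    have hn0 : (n.factorial : ℚ) ≠ 0 := Nat.cast_ne_zero.2 n.factorial_ne_zero
    rw [hfac]
    push_cast
    field_simp
    ring
  · rw [if_neg hn, if_neg hn, mul_zero]
end

section
/- The formal power series Z_0 satisfies the differential equation D(Z_0) = λ³·D²(Z_0) + 4λ²·D(Z_0) + 2λ·Z_0 in ℚ[[λ]]. -/
open PowerSeries

lemma coeffZ (n : ℕ) :
    PowerSeries.coeff n (Zser 0) = if n % 2 = 0 then (dfact (n - 1) : ℚ) else 0 := by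
  simp [Zser, coeff_mk, mul_comm, mul_div_assoc, div_self, Nat.factorial_ne_zero]

set_option linter.deprecated false in
lemma coeff_derivativeFun' (f : ℚ⟦X⟧) (n : ℕ) :
    PowerSeries.coeff n (PowerSeries.derivativeFun f) = PowerSeries.coeff (n + 1) f * (n + 1) :=
  coeff_derivative f n

/-- The Dyson–Schwinger equation for the zero-dimensional scalar-QED
partition function: `D(Z_0) = λ³·D²(Z_0) + 4λ²·D(Z_0) + 2λ·Z_0` in `ℚ[[λ]]`. -/
theorem Zser_zero_dyson_schwinger :
    PowerSeries.derivativeFun (Zser 0)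
      = X ^ 3 * PowerSeries.derivativeFun (PowerSeries.derivativeFun (Zser 0))
        + 4 * X ^ 2 * PowerSeries.derivativeFun (Zser 0) + 2 * X * Zser 0 := by
  ext n
  rw [show (4 : ℚ⟦X⟧) * X ^ 2 * PowerSeries.derivativeFun (Zser 0)
        = X ^ 2 * (4 * PowerSeries.derivativeFun (Zser 0)) by ring,
      show (2 : ℚ⟦X⟧) * X * Zser 0 = X ^ 1 * (2 * Zser 0) by ring,
      show (4 : ℚ⟦X⟧) = C (4 : ℚ) from (map_ofNat (C (R := ℚ)) 4).symm,
      show (2 : ℚ⟦X⟧) = C (2 : ℚ) from (map_ofNat (C (R := ℚ)) 2).symm]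
  simp only [map_add, coeff_X_pow_mul', coeff_C_mul, coeff_derivativeFun', coeffZ]
  rcases Nat.even_or_odd n with ⟨k,hk⟩|⟨k,hk⟩ <;> subst hk
  · split_ifs <;> try omega
    all_goals norm_num
  · split_ifs <;> try omega
    · -- k ≥ 1
      obtain ⟨m, rfl⟩ : ∃ m, k = m + 1 := ⟨k - 1, by omega⟩
      simp only [show 2*(m+1)+1 = 2*m+3 by omega, show 2*m+3-3 = 2*m by omega,
        show 2*m+3-2 = 2*m+1 by omega, show 2*m+3-1 = 2*m+2 by omega,
        show 2*m+2-1 = 2*m+1 by omega, Nat.add_sub_cancel]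
      rw [show (dfact (2*m+3) : ℚ) = (2*m+3) * dfact (2*m+1) by norm_cast]
      push_cast
      ring
    · -- k = 0
      obtain rfl : k = 0 := by omega
      norm_num [dfact]
end

section
/- The formal power series M_1 := Z_1 · Z_0⁻¹ satisfies the differential equation M_1 = 1 + λ²·M_1 + λ³·D(M_1) + λ²·M_1² in ℚ[[λ]] (the Arquès–Béraud equation for the generating function of one-rooted maps). -/
open PowerSeries

/-- The generating function of one-rooted maps, `M₁ = Z₁/Z₀`. -/
noncomputable def M1 : PowerSeries ℚ := Zser 1 * (Zser 0)⁻¹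

lemma coeff_derivativeFun'_s5 (f : PowerSeries ℚ) (n : ℕ) :
    coeff n (derivativeFun f) = coeff (n + 1) f * (n + 1) :=
  coeff_derivative f n

lemma coeff_Zser0 (n : ℕ) :
    coeff n (Zser 0) = if n % 2 = 0 then (dfact (n - 1) : ℚ) else 0 := by
  have hf : ((Nat.factorial n : ℚ)) ≠ 0 := by
    exact_mod_cast Nat.factorial_ne_zero n
  simp only [Zser, coeff_mk, Nat.add_zero]
  split
  · rw [mul_comm, mul_div_assoc, div_self hf, mul_one]
  · rfl

lemma coeff_Zser1 (n : ℕ) :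
    coeff n (Zser 1) = if n % 2 = 0 then ((n : ℚ) + 1) * (dfact (n - 1) : ℚ) else 0 := by
  have hf : ((Nat.factorial n : ℚ)) ≠ 0 := by
    exact_mod_cast Nat.factorial_ne_zero n
  simp only [Zser, coeff_mk, Nat.factorial_succ]
  split
  · push_cast
    field_simp
  · rfl

lemma Zser1_eq : Zser 1 = Zser 0 + X * derivativeFun (Zser 0) := by
  ext n
  rw [map_add, coeff_Zser1, coeff_Zser0]
  cases n with
  | zero => simp [coeff_zero_X_mul]
  | succ m =>
      rw [coeff_succ_X_mul, coeff_derivativeFun'_s5, coeff_Zser0]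
      simp only [Nat.add_sub_cancel]
      split
      · push_cast; ring
      · simp

lemma hODE : derivativeFun (Zser 0) =
    2 * (X * Zser 0) + 4 * (X ^ 2 * derivativeFun (Zser 0))
      + X ^ 3 * derivativeFun (derivativeFun (Zser 0)) := by
  have e2 : (2 : PowerSeries ℚ) = C 2 := by simp [map_ofNat]
  have e4 : (4 : PowerSeries ℚ) = C 4 := by simp [map_ofNat]
  rw [e2, e4]
  ext n
  rw [map_add, map_add, coeff_C_mul, coeff_C_mul, coeff_derivativeFun'_s5, coeff_Zser0]
  match n with
  | 0 => simp [coeff_zero_X_mul]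
  | 1 =>
      rw [coeff_succ_X_mul, coeff_Zser0]
      have h2 : coeff 1 (X ^ 2 * derivativeFun (Zser 0)) = 0 := by
        rw [coeff_X_pow_mul' _ 2 1]; simp
      have h3 : coeff 1 (X ^ 3 * derivativeFun (derivativeFun (Zser 0))) = 0 := by
        rw [coeff_X_pow_mul' _ 3 1]; simp
      rw [h2, h3]
      norm_num [dfact]
  | 2 =>
      rw [coeff_succ_X_mul, coeff_Zser0]
      have h2 : coeff 2 (X ^ 2 * derivativeFun (Zser 0)) =
          coeff 0 (derivativeFun (Zser 0)) := by
        rw [show (2 : ℕ) = 0 + 2 by rfl, coeff_X_pow_mul]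
      have h3 : coeff 2 (X ^ 3 * derivativeFun (derivativeFun (Zser 0))) = 0 := by
        rw [coeff_X_pow_mul' _ 3 2]; simp
      rw [h2, h3, coeff_derivativeFun'_s5, coeff_Zser0]
      norm_num
  | (m + 3) =>
      rw [coeff_succ_X_mul, coeff_Zser0]
      have h2 : coeff (m + 3) (X ^ 2 * derivativeFun (Zser 0)) =
          coeff (m + 1) (derivativeFun (Zser 0)) := by
        rw [show m + 3 = (m + 1) + 2 by ring, coeff_X_pow_mul]
      have h3 : coeff (m + 3) (X ^ 3 * derivativeFun (derivativeFun (Zser 0))) =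
          coeff m (derivativeFun (derivativeFun (Zser 0))) := by
        rw [show m + 3 = m + 3 by rfl, coeff_X_pow_mul]
      simp only [h2, h3, coeff_derivativeFun'_s5, coeff_Zser0]
      simp only [show m + 1 + 1 = m + 2 by omega, show m + 3 + 1 = m + 4 by omega,
        show m + 2 - 1 = m + 1 by omega, show m + 4 - 1 = m + 3 by omega]
      have hpar : (m + 4) % 2 = (m + 2) % 2 := by omega
      rw [hpar]
      by_cases h : (m + 2) % 2 = 0
      · rw [if_pos h, if_pos h]
        have hd : (dfact (m + 3) : ℚ) = ((m : ℚ) + 3) * (dfact (m + 1) : ℚ) := by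
          have : dfact (m + 3) = (m + 3) * dfact (m + 1) := rfl
          rw [this]; push_cast; ring
        rw [hd]; push_cast; ring
      · rw [if_neg h, if_neg h]; ring

lemma hZ0const : constantCoeff (Zser 0) = 1 := by
  have := coeff_Zser0 0
  rw [coeff_zero_eq_constantCoeff] at this
  simpa [dfact] using this

/-- The Arquès–Béraud differential equation for the generating
function of one-rooted maps: `M₁ = 1 + λ²·M₁ + λ³·D(M₁) + λ²·M₁²` in `ℚ[[λ]]`. -/
theorem M1_arques_beraud :
    M1 = 1 + X ^ 2 * M1 + X ^ 3 * PowerSeries.derivativeFun M1 + X ^ 2 * M1 ^ 2 := by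
  have hc : constantCoeff (Zser 0) ≠ 0 := by rw [hZ0const]; norm_num
  have hinv : Zser 0 * (Zser 0)⁻¹ = 1 := PowerSeries.mul_inv_cancel _ hc
  have hDinv : derivativeFun (Zser 0)⁻¹ = -(Zser 0)⁻¹ ^ 2 * derivativeFun (Zser 0) :=
    PowerSeries.derivative_inv' (Zser 0)
  have hM : M1 = Zser 1 * (Zser 0)⁻¹ := rfl
  have hDZ1 : derivativeFun (Zser 1) =
      2 * derivativeFun (Zser 0) + X * derivativeFun (derivativeFun (Zser 0)) := by
    rw [Zser1_eq, derivativeFun_add, derivativeFun_mul]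
    simp only [smul_eq_mul]
    rw [show derivativeFun X = (1 : PowerSeries ℚ) from PowerSeries.derivative_X]
    ring
  have hDM : derivativeFun M1 = derivativeFun (Zser 1) * (Zser 0)⁻¹
      + Zser 1 * (-(Zser 0)⁻¹ ^ 2 * derivativeFun (Zser 0)) := by
    rw [hM, derivativeFun_mul, hDinv]
    simp only [smul_eq_mul]; ring
  have key : Zser 0 * Zser 1 = Zser 0 ^ 2 + X ^ 2 * (Zser 0 * Zser 1)
      + X ^ 3 * (Zser 0 * derivativeFun (Zser 1) - Zser 1 * derivativeFun (Zser 0))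
      + X ^ 2 * Zser 1 ^ 2 := by
    rw [hDZ1, Zser1_eq]
    linear_combination (X * Zser 0) * hODE
  rw [hDM, hDZ1, hM]
  linear_combination ((Zser 0)⁻¹ ^ 2) * key
    + (1 + (Zser 0)⁻¹ * Zser 0 - Zser 1 * (Zser 0)⁻¹ + X ^ 2 * Zser 1 * (Zser 0)⁻¹
        + X ^ 3 * (Zser 0)⁻¹ * (2 * derivativeFun (Zser 0)
            + X * derivativeFun (derivativeFun (Zser 0)))) * hinv
    + (X ^ 3 * (Zser 0)⁻¹ ^ 2 * Zser 0) * hDZ1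
end

section
/- For every integer N ≥ 1 there exist Laurent polynomials c_0, c_1, …, c_N in ℚ[λ, λ⁻¹] with c_N ≠ 0 such that, identifying ℚ[[λ]] with its image in the field of formal Laurent series ℚ((λ)), the identity M_N = Σ_{k=0}^{N} c_k · M_1^k holds; that is, the generating function M_N of N-rooted maps is a polynomial of degree N in M_1 with λ-dependent coefficients. -/
open PowerSeries Finset

/-- The closed-form generating function of `N`-rooted maps:
`M_N = Σ_{α₁+2α₂+⋯+NαN = N} N!/(α₁!⋯αN!) · (−1)^{Σαⱼ−1} (Σαⱼ−1)! · Z₀^{−Σαⱼ}`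
`· Π_j (Z_j/(j!)²)^{αⱼ}`. -/
noncomputable def MN (N : ℕ) : PowerSeries ℚ :=
  ∑ a ∈ (Fintype.piFinset fun _ : Fin N => Finset.range (N + 1)).filter
      (fun a => ∑ j : Fin N, (j.val + 1) * a j = N),
    (PowerSeries.C (((N.factorial : ℚ) / ∏ j : Fin N, ((a j).factorial : ℚ))
        * (-1 : ℚ) ^ ((∑ j, a j) - 1) * (((∑ j, a j) - 1).factorial : ℚ)))
      * ((Zser 0)⁻¹) ^ (∑ j, a j)
      * ∏ j : Fin N,
          (PowerSeries.C (1 / (((j.val + 1).factorial : ℚ)) ^ 2) * Zser (j.val + 1)) ^ a j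

/-- The natural inclusion of Laurent polynomials into formal Laurent series. -/
noncomputable def lpToLs (p : LaurentPolynomial ℚ) : LaurentSeries ℚ :=
  Finsupp.sum p.coeff fun n a => (HahnSeries.single n a : LaurentSeries ℚ)


lemma dfact_succ' (n : ℕ) : dfact (n + 1) = (n + 1) * dfact (n - 1) := by
  cases n with
  | zero => rfl
  | succ k => rfl

lemma Zrec (m : ℕ) :
    Zser (m + 1) = PowerSeries.C (m + 1 : ℚ) * Zser m + X ^ 2 * Zser (m + 2) := by
  ext n
  rcases n with _ | _ | n
  · simp [Zser, Nat.factorial_succ, dfact]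
  · rw [map_add, PowerSeries.coeff_C_mul]
    simp [Zser, coeff_X_pow_mul', Nat.one_mod]
  · rw [map_add, PowerSeries.coeff_C_mul]
    have hX : (PowerSeries.coeff (n + 2)) (X ^ 2 * Zser (m + 2))
        = PowerSeries.coeff n (Zser (m + 2)) := by
      simpa using PowerSeries.coeff_X_pow_mul (Zser (m + 2)) 2 n
    rw [hX]
    simp only [Zser, coeff_mk]
    have h2 : (n + 2) % 2 = n % 2 := by omega
    rw [h2]
    by_cases hn : n % 2 = 0
    · simp only [hn, if_pos]
      have hd : dfact (n + 2 - 1) = (n + 1) * dfact (n - 1) := by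
        simpa using dfact_succ' n
      have hf1 : ((n + 2 + (m + 1)).factorial : ℚ)
          = ((n + m + 3 : ℕ) : ℚ) * ((n + 2 + m).factorial : ℚ) := by
        have h : n + 2 + (m + 1) = (n + 2 + m) + 1 := by ring
        rw [h, Nat.factorial_succ]
        push_cast
        ring_nf
      have hf2 : ((n + 2).factorial : ℚ)
          = ((n + 2 : ℕ) : ℚ) * ((n + 1 : ℕ) : ℚ) * (n.factorial : ℚ) := by
        rw [Nat.factorial_succ, Nat.factorial_succ]
        push_cast
        ring
      have hf3 : ((n + (m + 2)).factorial : ℚ) = ((n + 2 + m).factorial : ℚ) := by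
        norm_num; ring_nf
      have hnf : (n.factorial : ℚ) ≠ 0 := by exact_mod_cast n.factorial_ne_zero
      rw [hd, hf1, hf2, hf3]
      field_simp
      push_cast
      ring
    · simp [hn]

lemma Z0eq : Zser 0 = 1 + X ^ 2 * Zser 1 := by
  ext n
  rcases n with _ | _ | n
  · simp [Zser, dfact]
  · simp [Zser, coeff_X_pow_mul', Nat.one_mod]
  · rw [map_add]
    have hX : (PowerSeries.coeff (n + 2)) (X ^ 2 * Zser 1)
        = PowerSeries.coeff n (Zser 1) := by
      simpa using PowerSeries.coeff_X_pow_mul (Zser 1) 2 n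
    have h1 : (PowerSeries.coeff (n + 2)) (1 : PowerSeries ℚ) = 0 := by
      simp
    rw [hX, h1, zero_add]
    simp only [Zser, coeff_mk]
    have h2 : (n + 2) % 2 = n % 2 := by omega
    rw [h2]
    by_cases hn : n % 2 = 0
    · simp only [hn, if_pos]
      have hd : dfact (n + 2 - 1) = (n + 1) * dfact (n - 1) := by
        simpa using dfact_succ' n
      have hnf : (n.factorial : ℚ) ≠ 0 := by exact_mod_cast n.factorial_ne_zero
      rw [hd]
      rw [Nat.add_zero, Nat.factorial_succ, Nat.factorial_succ]
      field_simp
      push_cast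
      ring
    · simp [hn]

lemma Z0const : PowerSeries.constantCoeff (Zser 0) = 1 := by
  simp [Zser, dfact, ← PowerSeries.coeff_zero_eq_constantCoeff]

lemma Z0unit : Zser 0 * (Zser 0)⁻¹ = 1 :=
  PowerSeries.mul_inv_cancel _ (by rw [Z0const]; norm_num)


noncomputable def singleHom : Multiplicative ℤ →* LaurentSeries ℚ where
  toFun n := HahnSeries.single (Multiplicative.toAdd n) 1
  map_one' := by
    simpa using HahnSeries.single_zero_one
  map_mul' a b := by
    rw [HahnSeries.single_mul_single, one_mul]
    rfl

noncomputable def ell : LaurentPolynomial ℚ →ₐ[ℚ] LaurentSeries ℚ :=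
  AddMonoidAlgebra.lift ℚ (LaurentSeries ℚ) ℤ singleHom

lemma singleHom_apply (x : Multiplicative ℤ) :
    singleHom x = HahnSeries.single (Multiplicative.toAdd x) 1 := rfl

lemma ell_single (n : ℤ) (a : ℚ) :
    ell (AddMonoidAlgebra.single n a) = HahnSeries.single n a := by
  rw [ell, AddMonoidAlgebra.lift_single, Algebra.smul_def, singleHom_apply]
  have halg : (algebraMap ℚ (LaurentSeries ℚ)) a = HahnSeries.C a := by
    rw [eq_ratCast (algebraMap ℚ (LaurentSeries ℚ)) a,
      eq_ratCast (HahnSeries.C : ℚ →+* LaurentSeries ℚ) a]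
  rw [halg, HahnSeries.C_apply, HahnSeries.single_mul_single, zero_add, mul_one]
  simp

lemma lpToLs_eq (p : LaurentPolynomial ℚ) : lpToLs p = ell p := by
  rw [lpToLs, ell, AddMonoidAlgebra.lift_apply]
  exact Finsupp.sum_congr fun n _ => by rw [← ell_single, ell, AddMonoidAlgebra.lift_single]

lemma ell_T (n : ℤ) : ell (LaurentPolynomial.T n) = HahnSeries.single n 1 :=
  ell_single n 1

lemma ell_C (q : ℚ) : ell (LaurentPolynomial.C q) = HahnSeries.C q :=
  ell_single 0 q

noncomputable def iK : PowerSeries ℚ →+* LaurentSeries ℚ := HahnSeries.ofPowerSeries ℤ ℚ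

lemma iK_C (q : ℚ) : iK (PowerSeries.C q) = HahnSeries.C q :=
  HahnSeries.ofPowerSeries_C q

lemma iK_X2 : iK (X ^ 2 : PowerSeries ℚ) = HahnSeries.single (2 : ℤ) 1 :=
  HahnSeries.ofPowerSeries_X_pow 2

noncomputable def fK (j : ℕ) : LaurentSeries ℚ := iK (Zser j) * (iK (Zser 0))⁻¹

lemma hz0ne : iK (Zser 0) ≠ 0 := by
  intro h
  have h0 : Zser 0 = 0 :=
    HahnSeries.ofPowerSeries_injective (Γ := ℤ) (R := ℚ) (by rw [map_zero]; exact h)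
  have := Z0const
  rw [h0] at this
  simp at this

lemma hinvK : iK ((Zser 0)⁻¹) = (iK (Zser 0))⁻¹ := by
  have h := congrArg iK Z0unit
  rw [map_mul, map_one] at h
  exact eq_inv_of_mul_eq_one_right h

lemma hfK0 : fK 0 = 1 := mul_inv_cancel₀ hz0ne

lemma hfK1 : fK 1 = iK M1 := by
  rw [M1, map_mul, hinvK, fK]

lemma single_neg_two_mul :
    (HahnSeries.single (-2 : ℤ) (1 : ℚ) : LaurentSeries ℚ) * HahnSeries.single (2 : ℤ) (1 : ℚ) = 1 := by
  rw [HahnSeries.single_mul_single]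
  norm_num

lemma hrecK (m : ℕ) :
    fK (m + 2) = HahnSeries.single (-2 : ℤ) (1 : ℚ) *
      (fK (m + 1) - HahnSeries.C ((m : ℚ) + 1) * fK m) := by
  have h := congrArg iK (Zrec m)
  rw [map_add, map_mul, map_mul, iK_C, iK_X2] at h
  have h2 := congrArg (fun y => y * (iK (Zser 0))⁻¹) h
  simp only [add_mul, mul_assoc] at h2
  have h3 : fK (m + 1) = HahnSeries.C ((m : ℚ) + 1) * fK m +
      HahnSeries.single (2 : ℤ) (1 : ℚ) * fK (m + 2) := by
    simpa [fK, mul_assoc] using h2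
  rw [h3]
  have expand : HahnSeries.C ((m : ℚ) + 1) * fK m + HahnSeries.single (2:ℤ) (1:ℚ) * fK (m + 2)
      - HahnSeries.C ((m : ℚ) + 1) * fK m = HahnSeries.single (2:ℤ) (1:ℚ) * fK (m + 2) := by
    ring
  rw [expand, ← mul_assoc, single_neg_two_mul, one_mul]

noncomputable def gp : ℕ → Polynomial (LaurentPolynomial ℚ)
  | 0 => 1
  | 1 => Polynomial.X
  | m + 2 => Polynomial.C (LaurentPolynomial.T (-2)) *
      (gp (m + 1) - Polynomial.C (LaurentPolynomial.C ((m : ℚ) + 1)) * gp m)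

noncomputable def phiR : Polynomial (LaurentPolynomial ℚ) →+* LaurentSeries ℚ :=
  Polynomial.eval₂RingHom ell.toRingHom (iK M1)

lemma phiR_C (p : LaurentPolynomial ℚ) : phiR (Polynomial.C p) = ell p := by
  simp [phiR]

lemma phiR_X : phiR Polynomial.X = iK M1 := by
  simp [phiR]

lemma phiR_gp_pair : ∀ m, phiR (gp m) = fK m ∧ phiR (gp (m + 1)) = fK (m + 1) := by
  intro m
  induction m with
  | zero =>
    constructor
    · rw [show gp 0 = 1 from rfl, map_one, hfK0]
    · rw [show gp 1 = Polynomial.X from rfl, phiR_X, hfK1]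
  | succ k ih =>
    refine ⟨ih.2, ?_⟩
    rw [show gp (k + 2) = Polynomial.C (LaurentPolynomial.T (-2)) *
      (gp (k + 1) - Polynomial.C (LaurentPolynomial.C ((k : ℚ) + 1)) * gp k) from rfl]
    rw [map_mul, map_sub, map_mul, phiR_C, phiR_C, ell_T, ell_C, ih.1, ih.2, hrecK k]

lemma phiR_gp (m : ℕ) : phiR (gp m) = fK m := (phiR_gp_pair m).1

lemma gp_deg_pair : ∀ m, (gp m).natDegree ≤ 1 ∧ (gp (m + 1)).natDegree ≤ 1 := by
  intro m
  induction m with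
  | zero =>
    exact ⟨by simp [show gp 0 = 1 from rfl], by simp [show gp 1 = Polynomial.X from rfl]⟩
  | succ k ih =>
    refine ⟨ih.2, ?_⟩
    rw [show gp (k + 2) = Polynomial.C (LaurentPolynomial.T (-2)) *
      (gp (k + 1) - Polynomial.C (LaurentPolynomial.C ((k : ℚ) + 1)) * gp k) from rfl]
    refine le_trans (Polynomial.natDegree_mul_le) ?_
    rw [Polynomial.natDegree_C, zero_add]
    refine le_trans (Polynomial.natDegree_sub_le _ _) (max_le ih.2 ?_)
    refine le_trans (Polynomial.natDegree_mul_le) ?_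
    rw [Polynomial.natDegree_C, zero_add]
    exact ih.1

lemma gp_deg (m : ℕ) : (gp m).natDegree ≤ 1 := (gp_deg_pair m).1


/-- For every `N ≥ 1` there are Laurent polynomials `c₀, …, c_N` with
`c_N ≠ 0` such that, in the field of formal Laurent series `ℚ((λ))`,
`M_N = Σ_{k=0}^{N} c_k · M₁^k`. -/
theorem MN_polynomial_in_M1 (N : ℕ) (hN : 1 ≤ N) :
    ∃ c : Fin (N + 1) → LaurentPolynomial ℚ,
      c (Fin.last N) ≠ 0 ∧
      ((MN N : PowerSeries ℚ) : LaurentSeries ℚ)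
        = ∑ k : Fin (N + 1), lpToLs (c k) * ((M1 : PowerSeries ℚ) : LaurentSeries ℚ) ^ (k : ℕ) := by
  classical
  set S := (Fintype.piFinset fun _ : Fin N => Finset.range (N + 1)).filter
      (fun a => ∑ j : Fin N, (j.val + 1) * a j = N) with hS
  set cc : (Fin N → ℕ) → ℚ := fun a =>
    ((N.factorial : ℚ) / ∏ j : Fin N, ((a j).factorial : ℚ))
      * (-1 : ℚ) ^ ((∑ j, a j) - 1) * (((∑ j, a j) - 1).factorial : ℚ) with hcc
  set ee : Fin N → ℚ := fun j => 1 / (((j.val + 1).factorial : ℚ)) ^ 2 with hee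
  set dd : (Fin N → ℕ) → ℚ := fun a => cc a * ∏ j : Fin N, ee j ^ a j with hdd
  set GN : Polynomial (LaurentPolynomial ℚ) :=
    ∑ a ∈ S, Polynomial.C (LaurentPolynomial.C (dd a)) *
      ∏ j : Fin N, (gp (j.val + 1)) ^ a j with hGN
  -- the special tuple
  set efun : Fin N → ℕ := fun j => if j = ⟨0, hN⟩ then N else 0 with hefun
  have hefun_mem : efun ∈ S := by
    rw [hS, Finset.mem_filter]
    constructor
    · rw [Fintype.mem_piFinset]
      intro j
      rw [Finset.mem_range]
      by_cases h : j = ⟨0, hN⟩ <;> simp [hefun, h] <;> omega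
    · rw [Fintype.sum_eq_single ⟨0, hN⟩ (fun j hj => by simp [hefun, hj])]
      simp [hefun]
  -- sum bound
  have hsum_le : ∀ a ∈ S, (∑ j, a j) ≤ N := by
    intro a ha
    have hw : ∑ j : Fin N, (j.val + 1) * a j = N := (Finset.mem_filter.mp ha).2
    calc (∑ j, a j) ≤ ∑ j : Fin N, (j.val + 1) * a j :=
          Finset.sum_le_sum fun j _ => Nat.le_mul_of_pos_left (a j) (Nat.succ_pos _)
      _ = N := hw
  have hsum_lt : ∀ a ∈ S, a ≠ efun → (∑ j, a j) < N := by
    intro a ha hne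
    rcases lt_or_eq_of_le (hsum_le a ha) with h | h
    · exact h
    exfalso
    apply hne
    have hw : ∑ j : Fin N, (j.val + 1) * a j = N := (Finset.mem_filter.mp ha).2
    have hsplit : ∑ j : Fin N, (j.val + 1) * a j
        = ∑ j : Fin N, j.val * a j + ∑ j : Fin N, a j := by
      rw [← Finset.sum_add_distrib]
      exact Finset.sum_congr rfl fun j _ => by ring
    have hz : ∑ j : Fin N, j.val * a j = 0 := by omega
    have hzero : ∀ j : Fin N, j.val * a j = 0 := by
      intro j
      exact (Finset.sum_eq_zero_iff.mp hz) j (Finset.mem_univ j)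
    funext j
    by_cases hj : j = ⟨0, hN⟩
    · subst hj
      have h0 : a ⟨0, hN⟩ = ∑ j, a j := by
        rw [Fintype.sum_eq_single ⟨0, hN⟩]
        intro j hjne
        have hjv : j.val ≠ 0 := by
          intro hv
          exact hjne (Fin.ext hv)
        have := hzero j
        exact (Nat.mul_eq_zero.mp this).resolve_left hjv
      simp [hefun, h0, h]
    · have hjv : j.val ≠ 0 := by
        intro hv
        exact hj (Fin.ext hv)
      have := hzero j
      simp only [hefun, hj, if_false]
      exact (Nat.mul_eq_zero.mp this).resolve_left hjv
  -- degree bound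
  have hdeg_term : ∀ a, (Polynomial.C (LaurentPolynomial.C (dd a)) *
      ∏ j : Fin N, (gp (j.val + 1)) ^ a j).natDegree ≤ ∑ j, a j := by
    intro a
    refine le_trans Polynomial.natDegree_mul_le ?_
    rw [Polynomial.natDegree_C, zero_add]
    refine le_trans (Polynomial.natDegree_prod_le _ _) ?_
    refine Finset.sum_le_sum fun j _ => ?_
    refine le_trans Polynomial.natDegree_pow_le ?_
    calc a j * (gp (j.val + 1)).natDegree ≤ a j * 1 := Nat.mul_le_mul_left _ (gp_deg _)
      _ = a j := Nat.mul_one _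
  have hdegGN : GN.natDegree ≤ N := by
    rw [hGN]
    apply Polynomial.natDegree_sum_le_of_forall_le
    intro a ha
    exact le_trans (hdeg_term a) (hsum_le a ha)
  -- coefficient at N
  have hprod_e : ∏ j : Fin N, (gp (j.val + 1)) ^ efun j = Polynomial.X ^ N := by
    rw [Fintype.prod_eq_single ⟨0, hN⟩ (fun j hj => by simp [hefun, hj])]
    simp [hefun, show gp 1 = Polynomial.X from rfl]
  have hsum_e : (∑ j, efun j) = N := by
    rw [Fintype.sum_eq_single ⟨0, hN⟩ (fun j hj => by simp [hefun, hj])]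
    simp [hefun]
  have hprodfact_e : (∏ j : Fin N, ((efun j).factorial : ℚ)) = (N.factorial : ℚ) := by
    rw [Fintype.prod_eq_single ⟨0, hN⟩ (fun j hj => by simp [hefun, hj])]
    simp [hefun]
  have hprodpow_e : (∏ j : Fin N, ee j ^ efun j) = 1 := by
    rw [Fintype.prod_eq_single ⟨0, hN⟩ (fun j hj => by simp [hefun, hj])]
    simp [hefun, hee]
  have hdd_e : dd efun = (-1 : ℚ) ^ (N - 1) * ((N - 1).factorial : ℚ) := by
    rw [hdd]
    simp only [hprodpow_e, mul_one, hcc, hsum_e, hprodfact_e]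
    rw [div_self (by exact_mod_cast N.factorial_ne_zero)]
    ring
  have hcoeffN : GN.coeff N
      = LaurentPolynomial.C ((-1 : ℚ) ^ (N - 1) * ((N - 1).factorial : ℚ)) := by
    rw [hGN, Polynomial.finset_sum_coeff]
    rw [Finset.sum_eq_single_of_mem efun hefun_mem (fun a ha hne => by
      apply Polynomial.coeff_eq_zero_of_natDegree_lt
      exact lt_of_le_of_lt (hdeg_term a) (hsum_lt a ha hne))]
    rw [hprod_e, Polynomial.coeff_C_mul, Polynomial.coeff_X_pow, if_pos rfl, mul_one, hdd_e]
  -- evaluation identity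
  have hterm : ∀ a : Fin N → ℕ,
      phiR (Polynomial.C (LaurentPolynomial.C (dd a)) * ∏ j : Fin N, (gp (j.val + 1)) ^ a j)
      = iK ((PowerSeries.C (cc a)) * ((Zser 0)⁻¹) ^ (∑ j, a j)
          * ∏ j : Fin N, (PowerSeries.C (ee j) * Zser (j.val + 1)) ^ a j) := by
    intro a
    have hL : phiR (Polynomial.C (LaurentPolynomial.C (dd a))
          * ∏ j : Fin N, (gp (j.val + 1)) ^ a j)
        = HahnSeries.C (dd a) * ∏ j : Fin N, fK (j.val + 1) ^ a j := by
      rw [map_mul, phiR_C, ell_C, map_prod]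
      simp only [map_pow, phiR_gp]
    have hR : iK ((PowerSeries.C (cc a) * ((Zser 0)⁻¹) ^ (∑ j, a j))
          * ∏ j : Fin N, (PowerSeries.C (ee j) * Zser (j.val + 1)) ^ a j)
        = HahnSeries.C (cc a) * ((iK (Zser 0))⁻¹) ^ (∑ j, a j)
          * ∏ j : Fin N, (HahnSeries.C (ee j) * iK (Zser (j.val + 1))) ^ a j := by
      rw [map_mul, map_mul, iK_C, map_pow, hinvK, map_prod]
      simp only [map_pow, map_mul, iK_C]
    rw [hL, hR]
    have h1 : ∏ j : Fin N, (HahnSeries.C (ee j) * iK (Zser (j.val + 1))) ^ a j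
        = HahnSeries.C (∏ j : Fin N, ee j ^ a j)
          * ∏ j : Fin N, iK (Zser (j.val + 1)) ^ a j := by
      rw [map_prod, ← Finset.prod_mul_distrib]
      exact Finset.prod_congr rfl fun j _ => by rw [mul_pow, map_pow]
    have h2 : ∏ j : Fin N, fK (j.val + 1) ^ a j
        = (∏ j : Fin N, iK (Zser (j.val + 1)) ^ a j)
          * ((iK (Zser 0))⁻¹) ^ (∑ j, a j) := by
      rw [← Finset.prod_pow_eq_pow_sum, ← Finset.prod_mul_distrib]
      exact Finset.prod_congr rfl fun j _ => by rw [fK, mul_pow]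
    have hdd' : dd a = cc a * ∏ j : Fin N, ee j ^ a j := rfl
    rw [h1, h2, hdd', show HahnSeries.C (cc a * ∏ j : Fin N, ee j ^ a j)
      = HahnSeries.C (cc a) * HahnSeries.C (∏ j : Fin N, ee j ^ a j) from map_mul _ _ _]
    ring
  have hphiGN : phiR GN = iK (MN N) := by
    rw [hGN, MN, map_sum, ← hS, map_sum]
    exact Finset.sum_congr rfl fun a _ => hterm a
  -- conclusion
  refine ⟨fun k => GN.coeff k, ?_, ?_⟩
  · show GN.coeff (Fin.last N).val ≠ 0
    rw [Fin.val_last, hcoeffN]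
    intro h0
    have h1 := congrArg ell h0
    rw [ell_C, map_zero] at h1
    refine HahnSeries.C_ne_zero ?_ h1
    exact mul_ne_zero (pow_ne_zero _ (by norm_num))
      (Nat.cast_ne_zero.mpr (Nat.factorial_ne_zero _))
  · show iK (MN N) = ∑ k : Fin (N + 1), lpToLs (GN.coeff k.val) * (iK M1) ^ (k : ℕ)
    rw [← hphiGN]
    rw [phiR, Polynomial.coe_eval₂RingHom]
    rw [Polynomial.eval₂_eq_sum_range' _ (lt_of_le_of_lt hdegGN (Nat.lt_succ_self N)) _]
    rw [Fin.sum_univ_eq_sum_range (fun k => lpToLs (GN.coeff k) * (iK M1) ^ k) (N + 1)]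
    refine Finset.sum_congr rfl fun i _ => ?_
    rw [lpToLs_eq]
    rfl
end

section
/- With M_1 := Z_1·Z_0⁻¹ and M_2 := (1/2)·Z_2·Z_0⁻¹ − (Z_1·Z_0⁻¹)², the identity 2λ²·M_2 = M_1 − 1 − 2λ²·M_1² holds in ℚ[[λ]]. -/
open PowerSeries

/-- The generating function of two-rooted maps, `M₂ = (1/2)·Z₂/Z₀ − (Z₁/Z₀)²`. -/
noncomputable def M2 : PowerSeries ℚ :=
  (PowerSeries.C (R := ℚ) (1 / 2)) * Zser 2 * (Zser 0)⁻¹ - (Zser 1 * (Zser 0)⁻¹) ^ 2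

/-- The key coefficient identity: `λ²·Z₂ = Z₁ − Z₀`. -/
lemma key : Zser 2 * X ^ 2 = Zser 1 - Zser 0 := by
  ext n
  rw [PowerSeries.coeff_mul_X_pow']
  simp only [Zser, coeff_mk, map_sub]
  match n with
  | 0 => norm_num [dfact]
  | 1 => norm_num
  | (n+2) =>
    simp only [Nat.add_sub_cancel, show 2 ≤ n + 2 from le_add_self, if_true, Nat.add_mod_right]
    by_cases h : n % 2 = 0
    · simp only [h, if_true]
      match n with
      | 0 => norm_num [dfact, Nat.factorial]
      | 1 => simp at h
      | (m+2) =>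
        have hd : dfact (m + 2 + 2 - 1) = (m + 3) * dfact (m + 1) := by
          show dfact (m+1+2) = _; rw [dfact]
        have h1 : dfact (m + 2 - 1) = dfact (m+1) := rfl
        rw [hd, h1]
        have f1 : (Nat.factorial (m + 2 + 2) : ℚ) = (m+4) * (m+3) * Nat.factorial (m+2) := by
          push_cast [show m+2+2 = m+3+1 from rfl, Nat.factorial_succ]; ring
        have f2 : (Nat.factorial (m + 2 + 2 + 1) : ℚ)
            = (m+5) * (m+4) * (m+3) * Nat.factorial (m+2) := by
          push_cast [show m+2+2+1 = m+4+1 from rfl, show m+2+2 = m+3+1 from rfl,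
            Nat.factorial_succ]; ring
        have fpos : (Nat.factorial (m+2) : ℚ) ≠ 0 := by positivity
        rw [f1, f2]
        push_cast
        field_simp
        ring
    · simp [h]

/-- `2λ²·M₂ = M₁ − 1 − 2λ²·M₁²` in `ℚ[[λ]]`. -/
theorem M2_in_terms_of_M1 :
    2 * X ^ 2 * M2 = M1 - 1 - 2 * X ^ 2 * M1 ^ 2 := by
  have hu : Zser 0 * (Zser 0)⁻¹ = 1 := by
    apply PowerSeries.mul_inv_cancel
    simp [Zser, dfact, PowerSeries.constantCoeff_mk]
  have h2 : (2 : PowerSeries ℚ) * PowerSeries.C (R := ℚ) (1/2) = 1 := by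
    rw [show (2 : PowerSeries ℚ) = PowerSeries.C (R := ℚ) 2 from (map_ofNat _ 2).symm, ← map_mul]
    norm_num
  unfold M1 M2
  have expand : (2 : PowerSeries ℚ) * X ^ 2 * ((PowerSeries.C (R := ℚ) (1 / 2)) * Zser 2 * (Zser 0)⁻¹
      - (Zser 1 * (Zser 0)⁻¹) ^ 2)
      = (2 * PowerSeries.C (R := ℚ) (1/2)) * (Zser 2 * X ^ 2) * (Zser 0)⁻¹
        - 2 * X ^ 2 * (Zser 1 * (Zser 0)⁻¹) ^ 2 := by ring
  rw [expand, h2, key, one_mul, sub_mul]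
  rw [hu]
end

section
/- The coefficients B satisfy the closed forms: B_{n,−1} = n! for every n ≥ 0; B_{n,2n−1} = 1 for every n ≥ 0; and B_{n,2n−3} = n(3n−1)/2 for every n ≥ 1. -/
/-- `Bcoef n k` represents `B_{n, 2k−1}`: determined by `B_{0,−1} = 1` and the recursion
`B_{n+1,2k−1} = B_{n,2k−3} + (2k+n+1)·B_{n,2k−1}`, with the conventions
`B_{n,−3} = 0` and `B_{n,2n+1} = 0`. -/
def Bcoef : ℕ → ℕ → ℚ
  | 0, 0 => 1
  | 0, _ + 1 => 0
  | n + 1, 0 => (n + 1 : ℚ) * Bcoef n 0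
  | n + 1, k + 1 => Bcoef n k + (2 * (k + 1) + n + 1 : ℚ) * Bcoef n (k + 1)

lemma Bcoef_zero_of_lt : ∀ n k : ℕ, n < k → Bcoef n k = 0 := by
  intro n
  induction n with
  | zero =>
    intro k hk
    obtain ⟨k, rfl⟩ := Nat.exists_eq_add_of_lt hk
    simp [Bcoef]
  | succ n ih =>
    intro k hk
    obtain ⟨m, rfl⟩ := Nat.exists_eq_add_of_lt hk
    show Bcoef (n+1) ((n+1+m)+1) = 0
    rw [Bcoef, ih (n+1+m) (by omega), ih (n+1+m+1) (by omega)]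
    ring

lemma Bcoef_diag : ∀ n : ℕ, Bcoef n n = 1 := by
  intro n
  induction n with
  | zero => simp [Bcoef]
  | succ n ih =>
    rw [Bcoef, ih, Bcoef_zero_of_lt n (n+1) (by omega)]
    ring

lemma Bcoef_subdiag : ∀ n : ℕ, Bcoef (n+1) n = ((n:ℚ)+1) * (3*((n:ℚ)+1) - 1) / 2 := by
  intro n
  induction n with
  | zero => simp [Bcoef]; norm_num
  | succ n ih =>
    rw [Bcoef, ih, Bcoef_diag]
    push_cast
    ring

/-- Closed forms for the `B` coefficients: `B_{n,−1} = n!`,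
`B_{n,2n−1} = 1`, and `B_{n,2n−3} = n(3n−1)/2` for `n ≥ 1`. -/
theorem Bcoef_closed_forms :
    (∀ n : ℕ, Bcoef n 0 = (n.factorial : ℚ))
    ∧ (∀ n : ℕ, Bcoef n n = 1)
    ∧ (∀ n : ℕ, 1 ≤ n → Bcoef n (n - 1) = (n : ℚ) * (3 * (n : ℚ) - 1) / 2) := by
  refine ⟨?_, Bcoef_diag, ?_⟩
  · intro n
    induction n with
    | zero => simp [Bcoef]
    | succ n ih => rw [Bcoef, ih]; push_cast [Nat.factorial_succ]; ring
  · intro n hn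
    obtain ⟨m, rfl⟩ := Nat.exists_eq_add_of_le hn
    simpa [add_comm] using Bcoef_subdiag m
end
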